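/- Let P be a finite poset with a least element 0, and let a > 0 be a conjunctive element of P (i.e., for every x ∈ P the pair {a,x} has a least upper bound a ∨ x). Then for each b > a, the sum of μ_P(0,x) over all x ∈ P with a ∨ x = b equals 0. -/
import Mathlib


open scoped Classical

noncomputable instance instLFOofFintype {P : Type*} [Fintype P] [PartialOrder P] :
    LocallyFiniteOrder P :=
  Fintype.toLocallyFiniteOrder

theorem stmt2 {P : Type*} [Fintype P] [PartialOrder P] [OrderBot P]
    (a : P) (ha : ⊥ < a) (v : P → P) (hv : ∀ x : P, IsLUB {a, x} (v x))
    (b : P) (hb : a < b) :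
    ∑ x ∈ Finset.univ.filter fun x : P => v x = b, IncidenceAlgebra.mu ℤ (⊥ : P) x = 0 := by
  have hav : ∀ x : P, a ≤ v x := fun x => (hv x).1 (Set.mem_insert _ _)
  have hxv : ∀ x : P, x ≤ v x := fun x => (hv x).1 (Set.mem_insert_of_mem _ rfl)
  have hvle : ∀ x c : P, a ≤ c → x ≤ c → v x ≤ c := by
    intro x c h1 h2
    refine (hv x).2 ?_
    rintro y (rfl | rfl) <;> assumption
  suffices h : ∀ c : P, a ≤ c →
      ∑ x ∈ Finset.univ.filter fun x : P => v x = c, IncidenceAlgebra.mu ℤ (⊥ : P) x = 0 from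
    h b hb.le
  intro c
  induction c using WellFoundedLT.induction with
  | ind c IH =>
    intro hac
    -- the total sum over the interval [a, c]
    have key : ∑ y ∈ Finset.Icc a c,
        ∑ x ∈ Finset.univ.filter (fun x : P => v x = y), IncidenceAlgebra.mu ℤ (⊥ : P) x = 0 := by
      have hfib : ∀ y ∈ Finset.Icc a c,
          (Finset.univ.filter fun x : P => v x = y) =
            (Finset.Iic c).filter fun x : P => v x = y := by
        intro y hy
        rw [Finset.mem_Icc] at hy
        ext x
        simp only [Finset.mem_filter, Finset.mem_univ, true_and, Finset.mem_Iic]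
        exact ⟨fun hx => ⟨le_trans (hxv x) (hx ▸ hy.2), hx⟩, fun hx => hx.2⟩
      rw [show (∑ y ∈ Finset.Icc a c,
          ∑ x ∈ Finset.univ.filter (fun x : P => v x = y), IncidenceAlgebra.mu ℤ (⊥ : P) x) =
          ∑ y ∈ Finset.Icc a c, ∑ x ∈ (Finset.Iic c).filter (fun x : P => v x = y),
            IncidenceAlgebra.mu ℤ (⊥ : P) x from
        Finset.sum_congr rfl fun y hy => by rw [hfib y hy]]
      rw [Finset.sum_fiberwise_of_maps_to (g := v) (fun x hx =>
        Finset.mem_Icc.2 ⟨hav x, hvle x c hac (Finset.mem_Iic.1 hx)⟩)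
        (fun x => IncidenceAlgebra.mu ℤ (⊥ : P) x)]
      have : (Finset.Iic c : Finset P) = Finset.Icc ⊥ c := by
        ext x; simp
      rw [this, IncidenceAlgebra.sum_Icc_mu_right]
      have : (⊥ : P) ≠ c := fun h => absurd (h ▸ lt_of_lt_of_le ha hac) (lt_irrefl _)
      simp [this]
    have hsplit : Finset.Icc a c = insert c (Finset.Ico a c) := by
      rw [Finset.Icc_eq_cons_Ico hac, Finset.cons_eq_insert]
    rw [hsplit, Finset.sum_insert Finset.right_notMem_Ico] at key
    have hzero : ∑ y ∈ Finset.Ico a c,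
        ∑ x ∈ Finset.univ.filter (fun x : P => v x = y), IncidenceAlgebra.mu ℤ (⊥ : P) x = 0 :=
      Finset.sum_eq_zero fun y hy => by
        rw [Finset.mem_Ico] at hy; exact IH y hy.2 hy.1
    rw [hzero, add_zero] at key
    exact key
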